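/- arXiv:1709.01119 — 3 statements merged into one kernel-verified Lean document; each statement's English description precedes it below -/
import Mathlib

section
/- Let X be a metric space with asymptotic property C. Then for any coarse embedding f : Z → X of a metric space Z into X, the space Z has asymptotic property C. -/
/-!
Pull back a cover of `X` whose families are `ρ₂(Rᵢ)`-disjoint along `f`: the upper control
makes the preimages `Rᵢ`-disjoint, and properness of `ρ₁` makes them uniformly bounded.
-/

open Filter

/-- A family of subsets of a metric space is `r`-disjoint if points in distinct
members are at distance `> r`. -/
def RDisjoint {X : Type*} [MetricSpace X] (r : ℝ) (𝒰 : Set (Set X)) : Prop :=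
  ∀ U ∈ 𝒰, ∀ V ∈ 𝒰, U ≠ V → ∀ x ∈ U, ∀ y ∈ V, r < dist x y

/-- Asymptotic property C: for every sequence of positive reals `R` there are
finitely many `Rᵢ`-disjoint families, uniformly bounded, covering `X`. -/
def APC (X : Type*) [MetricSpace X] : Prop :=
  ∀ R : ℕ → ℝ, (∀ i, 0 < R i) →
    ∃ (n : ℕ) (𝒰 : Fin n → Set (Set X)) (D : ℝ),
      (∀ i : Fin n, RDisjoint (R i.val) (𝒰 i)) ∧
      (∀ x : X, ∃ i, ∃ U ∈ 𝒰 i, x ∈ U) ∧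
      (∀ i, ∀ U ∈ 𝒰 i, ∀ x ∈ U, ∀ y ∈ U, dist x y ≤ D)

section

variable {X Z : Type*} [MetricSpace X] [MetricSpace Z]

theorem RDisjoint.image_preimage {r s : ℝ} {𝒰 : Set (Set X)} (h𝒰 : RDisjoint s 𝒰) {f : Z → X}
    (hf : ∀ z z', dist z z' ≤ r → dist (f z) (f z') ≤ s) :
    RDisjoint r (Set.preimage f '' 𝒰) := by
  rintro _ ⟨U, hU, rfl⟩ _ ⟨V, hV, rfl⟩ hne x hx y hy
  have hUV : U ≠ V := fun h => hne (congrArg _ h)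
  by_contra! hxy
  exact (h𝒰 U hU V hV hUV _ hx _ hy).not_ge (hf x y hxy)

theorem dist_le_of_mem_image_preimage {D B : ℝ} {𝒰 : Set (Set X)}
    (h𝒰 : ∀ U ∈ 𝒰, ∀ x ∈ U, ∀ y ∈ U, dist x y ≤ D) {f : Z → X}
    (hf : ∀ z z', dist (f z) (f z') ≤ D → dist z z' ≤ B) :
    ∀ U ∈ Set.preimage f '' 𝒰, ∀ x ∈ U, ∀ y ∈ U, dist x y ≤ B := by
  rintro _ ⟨U, hU, rfl⟩ x hx y hy
  exact hf x y (h𝒰 U hU _ hx _ hy)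

theorem APC.of_coarse_control (hX : APC X) (f : Z → X)
    (hupper : ∀ r, ∃ s, ∀ z z', dist z z' ≤ r → dist (f z) (f z') ≤ s)
    (hlower : ∀ D, ∃ B, ∀ z z', dist (f z) (f z') ≤ D → dist z z' ≤ B) :
    APC Z := by
  intro R _
  choose S hS using hupper
  obtain ⟨n, 𝒰, D, hdisj, hcov, hbdd⟩ :=
    hX (fun i => max (S (R i)) 1) fun i => one_pos.trans_le (le_max_right _ _)
  obtain ⟨B, hB⟩ := hlower D
  refine ⟨n, fun i => Set.preimage f '' 𝒰 i, B, fun i => ?_, fun z => ?_,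
    fun i => dist_le_of_mem_image_preimage (hbdd i) hB⟩
  · exact (hdisj i).image_preimage fun z z' h => (hS _ z z' h).trans (le_max_left _ _)
  · obtain ⟨i, U, hU, hz⟩ := hcov (f z)
    exact ⟨i, f ⁻¹' U, Set.mem_image_of_mem _ hU, hz⟩

end

theorem apc_of_coarse_embedding_general
    {X Z : Type*} [MetricSpace X] [MetricSpace Z]
    (hX : APC X) (f : Z → X) (ρ₁ ρ₂ : ℝ → ℝ)
    (hρ₂mono : Monotone ρ₂)
    (hρ₁proper : Tendsto ρ₁ atTop atTop)
    (hlower : ∀ z z' : Z, ρ₁ (dist z z') ≤ dist (f z) (f z'))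
    (hupper : ∀ z z' : Z, dist (f z) (f z') ≤ ρ₂ (dist z z')) :
    APC Z := by
  have hupper' : ∀ r, ∃ s, ∀ z z', dist z z' ≤ r → dist (f z) (f z') ≤ s :=
    fun r => ⟨ρ₂ r, fun z z' h => (hupper z z').trans (hρ₂mono h)⟩
  have hlower' : ∀ D, ∃ B, ∀ z z', dist (f z) (f z') ≤ D → dist z z' ≤ B := by
    intro D
    obtain ⟨B, hB⟩ := (hρ₁proper.eventually_gt_atTop D).exists_forall_of_atTop
    refine ⟨B, fun z z' h => ?_⟩
    by_contra! hzz'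
    exact (hB _ hzz'.le).not_ge ((hlower z z').trans h)
  exact hX.of_coarse_control f hupper' hlower'

/-- Asymptotic property C pulls back along coarse embeddings. -/
theorem apc_of_coarse_embedding
    {X Z : Type*} [MetricSpace X] [MetricSpace Z]
    (hX : APC X) (f : Z → X) (ρ₁ ρ₂ : ℝ → ℝ)
    (hρ₁mono : Monotone ρ₁) (hρ₂mono : Monotone ρ₂)
    (hρ₁proper : Tendsto ρ₁ atTop atTop)
    (hlower : ∀ z z' : Z, ρ₁ (dist z z') ≤ dist (f z) (f z'))
    (hupper : ∀ z z' : Z, dist (f z) (f z') ≤ ρ₂ (dist z z')) :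
    APC Z :=
  apc_of_coarse_embedding_general hX f ρ₁ ρ₂ hρ₂mono hρ₁proper hlower hupper
end

section
/- Let X be a discrete metric space of bounded geometry such that for every R, ε > 0 there exist k ∈ ℕ, Rᵢ-disjoint families 𝒰₁,…,𝒰ₖ with ⋃ᵢ𝒰ᵢ covering X (for appropriate Rᵢ depending on R, ε), where every member U of every 𝒰ᵢ is bounded. Then X has property A. In particular, every metric space with asymptotic property C and bounded geometry has property A. -/
noncomputable instance : Fact ((1:ENNReal) ≤ 1) := ⟨le_rfl⟩

open Metric

/-- Bounded geometry: balls of each radius have uniformly bounded cardinality. -/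
def BoundedGeometry (X : Type*) [MetricSpace X] : Prop :=
  ∀ r > (0:ℝ), ∃ N : ℕ, ∀ x : X, (ball x r).Finite ∧ (ball x r).ncard < N

/-- Yu's property A. -/
def PropertyA (X : Type*) [MetricSpace X] : Prop :=
  ∀ R > (0:ℝ), ∀ ε > (0:ℝ), ∃ ξ : X → lp (fun _ : X => ℝ) 1,
    (∀ x, ‖ξ x‖ = 1) ∧
    (∀ x₁ x₂ : X, dist x₁ x₂ ≤ R → ‖ξ x₁ - ξ x₂‖ ≤ ε) ∧
    (∃ S > (0:ℝ), ∀ x : X,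
      Function.support (fun y : X => ξ x y) ⊆ closedBall x S)

/-!
Take scales `Mᵢ = 4R/ε · 2ⁱ` and apply asymptotic property C to the sequence `2Mᵢ`, getting
families `𝒰ᵢ`, the `i`-th one `2Mᵢ`-disjoint. For `x` and a member `U` of `𝒰ᵢ` let the bump be
`max 0 (1 - d(x, U)/Mᵢ)`; by `2Mᵢ`-disjointness at most one member of `𝒰ᵢ` has positive bump at
`x`, and putting that bump as a point mass at a fixed point of that member gives a vector of `ℓ¹(X)`
which moves by at most `2 d(x, y)/Mᵢ` from `x` to `y`. The sum `v x` of these vectors over `i` has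
norm at least `1` (the bump of a member containing `x` is `1`), moves by at most
`∑ᵢ 2R/Mᵢ ≤ ε` when `d(x, y) ≤ R` thanks to the geometric growth of the scales, and is supported
within `∑ᵢ Mᵢ + D` of `x`, where `D` bounds the diameters of the members.
Normalizing `v` costs only a factor `2` since `‖v x‖ ≥ 1`.
-/

section Normalize

variable {E : Type*} [NormedAddCommGroup E] [NormedSpace ℝ E]

theorem norm_normalize_le_one (x : E) : ‖NormedSpace.normalize x‖ ≤ 1 := by
  rcases eq_or_ne x 0 with rfl | hx
  · simp
  · exact (NormedSpace.norm_normalize hx).le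

theorem norm_normalize_sub_normalize_le {x : E} (hx : x ≠ 0) (y : E) :
    ‖NormedSpace.normalize x - NormedSpace.normalize y‖ ≤ 2 * ‖x - y‖ / ‖x‖ := by
  have hx₀ : 0 < ‖x‖ := norm_pos_iff.2 hx
  have hsplit : NormedSpace.normalize x - NormedSpace.normalize y
      = ‖x‖⁻¹ • (x - y) + ‖x‖⁻¹ • (‖y‖ - ‖x‖) • NormedSpace.normalize y := by
    rw [sub_smul, NormedSpace.norm_smul_normalize, smul_sub, smul_sub, smul_smul,
      inv_mul_cancel₀ hx₀.ne', one_smul, NormedSpace.normalize]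
    abel
  have hy : ‖(‖y‖ - ‖x‖) • NormedSpace.normalize y‖ ≤ ‖x - y‖ :=
    calc ‖(‖y‖ - ‖x‖) • NormedSpace.normalize y‖ ≤ |‖y‖ - ‖x‖| * 1 := by
          rw [norm_smul, Real.norm_eq_abs]
          gcongr
          exact norm_normalize_le_one y
      _ ≤ ‖x - y‖ := by rw [mul_one, norm_sub_rev]; exact abs_norm_sub_norm_le y x
  calc ‖NormedSpace.normalize x - NormedSpace.normalize y‖
      ≤ ‖x‖⁻¹ * ‖x - y‖ + ‖x‖⁻¹ * ‖(‖y‖ - ‖x‖) • NormedSpace.normalize y‖ := by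
        rw [hsplit]
        refine (norm_add_le _ _).trans_eq ?_
        rw [norm_smul, norm_smul, norm_inv, norm_norm]
    _ ≤ ‖x‖⁻¹ * ‖x - y‖ + ‖x‖⁻¹ * ‖x - y‖ := by gcongr
    _ = 2 * ‖x - y‖ / ‖x‖ := by ring

end Normalize

section

variable {X : Type*} [MetricSpace X]

noncomputable def bump (M : ℝ) (U : Set X) (x : X) : ℝ :=
  max 0 (1 - infDist x U / M)

theorem bump_nonneg (M : ℝ) (U : Set X) (x : X) : 0 ≤ bump M U x :=
  le_max_left _ _

theorem bump_eq_one_of_mem (M : ℝ) {U : Set X} {x : X} (hx : x ∈ U) : bump M U x = 1 := by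
  simp [bump, infDist_zero_of_mem hx]

theorem exists_dist_lt_of_bump_pos {M : ℝ} (hM : 0 < M) {U : Set X} (hU : U.Nonempty)
    {x : X} (hx : 0 < bump M U x) : ∃ u ∈ U, dist x u < M := by
  refine (infDist_lt_iff hU).1 ?_
  have : infDist x U / M < 1 := by
    rcases lt_max_iff.1 hx with h | h
    · exact absurd h (lt_irrefl 0)
    · linarith
  rwa [div_lt_one hM] at this

theorem abs_bump_sub_bump_le {M : ℝ} (hM : 0 < M) (U : Set X) (x y : X) :
    |bump M U x - bump M U y| ≤ dist x y / M :=
  calc |bump M U x - bump M U y|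
      ≤ |(1 - infDist x U / M) - (1 - infDist y U / M)| := by
        simp only [bump, max_comm (0 : ℝ)]
        exact abs_max_sub_max_le_abs _ _ _
    _ = |infDist x U - infDist y U| / M := by
        rw [show (1 - infDist x U / M) - (1 - infDist y U / M)
            = (infDist y U - infDist x U) / M by ring, abs_div, abs_of_pos hM, abs_sub_comm]
    _ ≤ dist x y / M := by
        gcongr
        simpa [Real.dist_eq] using (lipschitz_infDist_pt U).dist_le_mul x y

theorem RDisjoint.mono {r : ℝ} {𝒰 𝒱 : Set (Set X)} (h : RDisjoint r 𝒰) (h𝒱 : 𝒱 ⊆ 𝒰) :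
    RDisjoint r 𝒱 :=
  fun U hU V hV => h U (h𝒱 hU) V (h𝒱 hV)

theorem RDisjoint.eq_of_bump_pos {M : ℝ} (hM : 0 < M) {𝒰 : Set (Set X)}
    (h𝒰 : RDisjoint (2 * M) 𝒰) {U V : Set X} (hU : U ∈ 𝒰) (hV : V ∈ 𝒰)
    (hUne : U.Nonempty) (hVne : V.Nonempty) {x : X}
    (hUx : 0 < bump M U x) (hVx : 0 < bump M V x) : U = V := by
  by_contra hUV
  obtain ⟨u, hu, hxu⟩ := exists_dist_lt_of_bump_pos hM hUne hUx
  obtain ⟨v, hv, hxv⟩ := exists_dist_lt_of_bump_pos hM hVne hVx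
  have := h𝒰 U hU V hV hUV u hu v hv
  linarith [dist_triangle_left u v x]

open Classical in
noncomputable def bumpVector (𝒰 : Set (Set X)) (M : ℝ) (c : Set X → X) (x : X) :
    lp (fun _ : X => ℝ) 1 :=
  if h : ∃ U ∈ 𝒰, 0 < bump M U x then lp.single 1 (c h.choose) (bump M h.choose x) else 0

section BumpVector

open Classical

variable {𝒰 : Set (Set X)} {M : ℝ} {c : Set X → X}

theorem bumpVector_of_not_exists {x : X} (h : ¬∃ U ∈ 𝒰, 0 < bump M U x) :
    bumpVector 𝒰 M c x = 0 := by
  rw [bumpVector, dif_neg h]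

theorem bumpVector_apply_nonneg (x y : X) : 0 ≤ bumpVector 𝒰 M c x y := by
  rw [bumpVector]
  split_ifs
  · rw [lp.single_apply, Pi.single_apply]
    split_ifs
    · exact bump_nonneg _ _ _
    · exact le_rfl
  · exact le_rfl

variable (hM : 0 < M) (h𝒰 : RDisjoint (2 * M) 𝒰) (hc : ∀ U ∈ 𝒰, c U ∈ U)
include hM h𝒰 hc

theorem bumpVector_eq_single {U : Set X} (hU : U ∈ 𝒰) {x : X} (hUx : 0 < bump M U x) :
    bumpVector 𝒰 M c x = lp.single 1 (c U) (bump M U x) := by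
  have h : ∃ V ∈ 𝒰, 0 < bump M V x := ⟨U, hU, hUx⟩
  have hchoose : h.choose = U :=
    h𝒰.eq_of_bump_pos hM h.choose_spec.1 hU ⟨_, hc _ h.choose_spec.1⟩ ⟨_, hc U hU⟩
      h.choose_spec.2 hUx
  rw [bumpVector, dif_pos h, hchoose]

theorem bumpVector_apply_center {U : Set X} (hU : U ∈ 𝒰) {x : X} (hx : x ∈ U) :
    bumpVector 𝒰 M c x (c U) = 1 := by
  rw [bumpVector_eq_single hM h𝒰 hc hU (by rw [bump_eq_one_of_mem M hx]; exact one_pos),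
    lp.single_apply_self, bump_eq_one_of_mem M hx]

theorem norm_bumpVector_le {x y : X} (h : ∀ U ∈ 𝒰, 0 < bump M U x → bump M U y = 0) :
    ‖bumpVector 𝒰 M c x‖ ≤ dist x y / M := by
  by_cases hx : ∃ U ∈ 𝒰, 0 < bump M U x
  · obtain ⟨U, hU, hUx⟩ := hx
    calc ‖bumpVector 𝒰 M c x‖ = bump M U x - bump M U y := by
          rw [bumpVector_eq_single hM h𝒰 hc hU hUx, lp.norm_single (by norm_num),
            Real.norm_of_nonneg (bump_nonneg _ _ _), h U hU hUx, sub_zero]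
      _ ≤ |bump M U x - bump M U y| := le_abs_self _
      _ ≤ dist x y / M := abs_bump_sub_bump_le hM U x y
  · rw [bumpVector_of_not_exists hx, norm_zero]
    positivity

theorem norm_bumpVector_sub_le (x y : X) :
    ‖bumpVector 𝒰 M c x - bumpVector 𝒰 M c y‖ ≤ 2 * dist x y / M := by
  by_cases hboth : ∃ U ∈ 𝒰, 0 < bump M U x ∧ 0 < bump M U y
  · obtain ⟨U, hU, hUx, hUy⟩ := hboth
    calc ‖bumpVector 𝒰 M c x - bumpVector 𝒰 M c y‖ = |bump M U x - bump M U y| := by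
          rw [bumpVector_eq_single hM h𝒰 hc hU hUx, bumpVector_eq_single hM h𝒰 hc hU hUy,
            ← lp.single_sub, lp.norm_single (by norm_num), Real.norm_eq_abs]
      _ ≤ dist x y / M := abs_bump_sub_bump_le hM U x y
      _ ≤ 2 * dist x y / M := by gcongr; linarith [dist_nonneg (x := x) (y := y)]
  · push Not at hboth
    have hxy : ∀ U ∈ 𝒰, 0 < bump M U x → bump M U y = 0 := fun U hU hUx =>
      (hboth U hU hUx).antisymm (bump_nonneg _ _ _)
    have hyx : ∀ U ∈ 𝒰, 0 < bump M U y → bump M U x = 0 := fun U hU hUy =>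
      (not_lt.1 fun hUx => (hboth U hU hUx).not_gt hUy).antisymm (bump_nonneg _ _ _)
    calc ‖bumpVector 𝒰 M c x - bumpVector 𝒰 M c y‖
        ≤ ‖bumpVector 𝒰 M c x‖ + ‖bumpVector 𝒰 M c y‖ := norm_sub_le _ _
      _ ≤ dist x y / M + dist y x / M :=
          add_le_add (norm_bumpVector_le hM h𝒰 hc hxy) (norm_bumpVector_le hM h𝒰 hc hyx)
      _ = 2 * dist x y / M := by rw [dist_comm]; ring

theorem support_bumpVector_subset {D : ℝ} (hD : ∀ U ∈ 𝒰, ∀ u ∈ U, ∀ v ∈ U, dist u v ≤ D)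
    (x : X) : Function.support (bumpVector 𝒰 M c x) ⊆ closedBall x (M + D) := by
  intro y hy
  by_cases hx : ∃ U ∈ 𝒰, 0 < bump M U x
  · obtain ⟨U, hU, hUx⟩ := hx
    rw [Function.mem_support, bumpVector_eq_single hM h𝒰 hc hU hUx, lp.single_apply,
      Pi.single_apply] at hy
    obtain rfl : y = c U := by by_contra hyc; exact hy (if_neg hyc)
    obtain ⟨u, hu, hxu⟩ := exists_dist_lt_of_bump_pos hM ⟨_, hc U hU⟩ hUx
    rw [mem_closedBall, dist_comm]
    linarith [dist_triangle x u (c U), hD U hU u hu _ (hc U hU)]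
  · rw [Function.mem_support, bumpVector_of_not_exists hx] at hy
    exact absurd rfl hy

end BumpVector

theorem propertyA_of_forall_one_le_norm
    (h : ∀ R > (0 : ℝ), ∀ ε > (0 : ℝ), ∃ v : X → lp (fun _ : X => ℝ) 1,
      (∀ x, 1 ≤ ‖v x‖) ∧ (∀ x₁ x₂ : X, dist x₁ x₂ ≤ R → ‖v x₁ - v x₂‖ ≤ ε) ∧
      ∃ S, ∀ x, Function.support (v x) ⊆ closedBall x S) :
    PropertyA X := by
  intro R hR ε hε
  obtain ⟨v, hv₁, hvR, S, hS⟩ := h R hR (ε / 2) (by positivity)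
  have hv₀ : ∀ x, v x ≠ 0 := fun x => norm_pos_iff.1 (one_pos.trans_le (hv₁ x))
  refine ⟨fun x => NormedSpace.normalize (v x), fun x => NormedSpace.norm_normalize (hv₀ x),
    fun x₁ x₂ hx => ?_, max S 1, by positivity, fun x y hy => ?_⟩
  · calc ‖NormedSpace.normalize (v x₁) - NormedSpace.normalize (v x₂)‖
        ≤ 2 * ‖v x₁ - v x₂‖ / ‖v x₁‖ := norm_normalize_sub_normalize_le (hv₀ x₁) _
      _ ≤ 2 * ‖v x₁ - v x₂‖ := div_le_self (by positivity) (hv₁ x₁)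
      _ ≤ ε := by linarith [hvR x₁ x₂ hx]
  · have hvy : v x y ≠ 0 := by
      intro hvy
      apply hy
      simp [NormedSpace.normalize, hvy]
    exact closedBall_subset_closedBall (le_max_left _ _) (hS x hvy)

section SumBumpVector

variable {ι : Type*} [Fintype ι] {𝒰 : ι → Set (Set X)} {M : ι → ℝ} {c : Set X → X}
  (hM : ∀ i, 0 < M i) (h𝒰 : ∀ i, RDisjoint (2 * M i) (𝒰 i)) (hc : ∀ i, ∀ U ∈ 𝒰 i, c U ∈ U)
include hM h𝒰 hc

theorem one_le_norm_sum_bumpVector {x : X} (hx : ∃ i, ∃ U ∈ 𝒰 i, x ∈ U) :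
    1 ≤ ‖∑ i, bumpVector (𝒰 i) (M i) c x‖ := by
  obtain ⟨i, U, hU, hxU⟩ := hx
  calc (1 : ℝ) = bumpVector (𝒰 i) (M i) c x (c U) :=
        (bumpVector_apply_center (hM i) (h𝒰 i) (hc i) hU hxU).symm
    _ ≤ ∑ j, bumpVector (𝒰 j) (M j) c x (c U) :=
        Finset.single_le_sum (f := fun j => bumpVector (𝒰 j) (M j) c x (c U))
          (fun j _ => bumpVector_apply_nonneg x (c U)) (Finset.mem_univ i)
    _ = (∑ j, bumpVector (𝒰 j) (M j) c x) (c U) := by rw [lp.coeFn_sum, Finset.sum_apply]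
    _ ≤ ‖(∑ j, bumpVector (𝒰 j) (M j) c x) (c U)‖ := Real.le_norm_self _
    _ ≤ ‖∑ j, bumpVector (𝒰 j) (M j) c x‖ := lp.norm_apply_le_norm one_ne_zero _ _

theorem norm_sum_bumpVector_sub_le (x y : X) :
    ‖∑ i, bumpVector (𝒰 i) (M i) c x - ∑ i, bumpVector (𝒰 i) (M i) c y‖
      ≤ ∑ i, 2 * dist x y / M i :=
  calc ‖∑ i, bumpVector (𝒰 i) (M i) c x - ∑ i, bumpVector (𝒰 i) (M i) c y‖
      = ‖∑ i, (bumpVector (𝒰 i) (M i) c x - bumpVector (𝒰 i) (M i) c y)‖ := by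
        rw [Finset.sum_sub_distrib]
    _ ≤ ∑ i, ‖bumpVector (𝒰 i) (M i) c x - bumpVector (𝒰 i) (M i) c y‖ := norm_sum_le _ _
    _ ≤ ∑ i, 2 * dist x y / M i :=
        Finset.sum_le_sum fun i _ => norm_bumpVector_sub_le (hM i) (h𝒰 i) (hc i) x y

theorem support_sum_bumpVector_subset {D : ℝ}
    (hD : ∀ i, ∀ U ∈ 𝒰 i, ∀ u ∈ U, ∀ v ∈ U, dist u v ≤ D) (x : X) :
    Function.support ⇑(∑ i, bumpVector (𝒰 i) (M i) c x) ⊆ closedBall x (∑ i, M i + D) := by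
  intro y hy
  rw [Function.mem_support, lp.coeFn_sum, Finset.sum_apply] at hy
  obtain ⟨i, -, hi⟩ := Finset.exists_ne_zero_of_sum_ne_zero hy
  have hMi : M i ≤ ∑ j, M j :=
    Finset.single_le_sum (fun j _ => (hM j).le) (Finset.mem_univ i)
  exact closedBall_subset_closedBall (by linarith)
    (support_bumpVector_subset (hM i) (h𝒰 i) (hc i) (hD i) x hi)

end SumBumpVector

theorem sum_range_div_geometric_le (R : ℝ) {ε : ℝ} (hε : 0 < ε) (n : ℕ) :
    ∑ i ∈ Finset.range n, 2 * R / (4 * R / ε * 2 ^ i) ≤ ε := by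
  rcases eq_or_ne R 0 with rfl | hR
  · simp [hε.le]
  calc ∑ i ∈ Finset.range n, 2 * R / (4 * R / ε * 2 ^ i)
      = ε / 2 * ∑ i ∈ Finset.range n, (1 / 2 : ℝ) ^ i := by
        rw [Finset.mul_sum]
        refine Finset.sum_congr rfl fun i _ => ?_
        simp only [one_div, inv_pow]
        field_simp
        ring
    _ ≤ ε / 2 * 2 := by gcongr; exact sum_geometric_two_le n
    _ = ε := by ring

theorem exists_one_le_norm_of_apc (hapc : APC X) {R ε : ℝ} (hR : 0 < R) (hε : 0 < ε) :
    ∃ v : X → lp (fun _ : X => ℝ) 1,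
      (∀ x, 1 ≤ ‖v x‖) ∧ (∀ x₁ x₂ : X, dist x₁ x₂ ≤ R → ‖v x₁ - v x₂‖ ≤ ε) ∧
      ∃ S, ∀ x, Function.support (v x) ⊆ closedBall x S := by
  rcases isEmpty_or_nonempty X with hX | hX
  · exact ⟨isEmptyElim, isEmptyElim, fun x => isEmptyElim x, 0, isEmptyElim⟩
  set M : ℕ → ℝ := fun j => 4 * R / ε * 2 ^ j
  obtain ⟨n, 𝒰, D, h𝒰, hcov, hD⟩ := hapc (fun j => 2 * M j) fun j => by positivity
  have hM : ∀ i : Fin n, 0 < M i := fun i => by positivity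
  -- Empty members must go: `infDist x ∅ = 0`, so `bump M ∅` is identically `1`.
  set 𝒱 : Fin n → Set (Set X) := fun i => {U ∈ 𝒰 i | U.Nonempty}
  set c : Set X → X := fun U => Classical.epsilon (· ∈ U)
  have hc : ∀ i, ∀ U ∈ 𝒱 i, c U ∈ U := fun i U hU => Classical.epsilon_spec hU.2
  have h𝒱 : ∀ i : Fin n, RDisjoint (2 * M i) (𝒱 i) := fun i => (h𝒰 i).mono (Set.sep_subset _ _)
  refine ⟨fun x => ∑ i, bumpVector (𝒱 i) (M i) c x, fun x => ?_, fun x y hxy => ?_,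
    ∑ i : Fin n, M i + D, support_sum_bumpVector_subset hM h𝒱 hc fun i U hU => hD i U hU.1⟩
  · obtain ⟨i, U, hU, hxU⟩ := hcov x
    exact one_le_norm_sum_bumpVector hM h𝒱 hc ⟨i, U, ⟨hU, x, hxU⟩, hxU⟩
  · calc _ ≤ ∑ i : Fin n, 2 * dist x y / M i := norm_sum_bumpVector_sub_le hM h𝒱 hc x y
      _ ≤ ∑ i : Fin n, 2 * R / M i := by gcongr with i
      _ ≤ ε := (Fin.sum_univ_eq_sum_range (fun j => 2 * R / M j) n).trans_le
          (sum_range_div_geometric_le R hε n)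

end

theorem propertyA_of_apc_general {X : Type*} [MetricSpace X]
    (hapc : APC X) : PropertyA X :=
  propertyA_of_forall_one_le_norm fun _ hR _ hε => exists_one_le_norm_of_apc hapc hR hε

/-- A discrete metric space with bounded geometry and asymptotic property C
has property A. -/
theorem propertyA_of_apc {X : Type*} [MetricSpace X]
    (hbg : BoundedGeometry X) (hapc : APC X) : PropertyA X :=
  propertyA_of_apc_general hapc
end

section
/- If two metric spaces X and Y are coarsely equivalent, then X has asymptotic property C if and only if Y has asymptotic property C. -/
open Filter

/-- `X` and `Y` are coarsely equivalent: there is a coarse embedding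
`f : X → Y` whose image is coarsely dense in `Y`. -/
def CoarselyEquivalent (X Y : Type*) [MetricSpace X] [MetricSpace Y] : Prop :=
  ∃ (f : X → Y) (ρ₁ ρ₂ : ℝ → ℝ) (C : ℝ),
    Monotone ρ₁ ∧ Monotone ρ₂ ∧ Tendsto ρ₁ atTop atTop ∧
    (∀ x x' : X, ρ₁ (dist x x') ≤ dist (f x) (f x')) ∧
    (∀ x x' : X, dist (f x) (f x') ≤ ρ₂ (dist x x')) ∧
    0 < C ∧ (∀ y : Y, ∃ x : X, dist (f x) y < C)

/-!
Pulling back a cover along a coarse embedding `f : X → Y` preserves the two conditions of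
asymptotic property C: if `f` moves `R`-close points at most `S` apart, preimages of members of an
`S`-disjoint family form an `R`-disjoint family, and effective properness turns uniformly bounded
families into uniformly bounded ones. For the converse direction, a coarse inverse `g : Y → X`,
sending `y` to a point whose image is `C`-close to `y`, is itself a coarse embedding.
-/

structure IsCoarseEmbedding {X Y : Type*} [MetricSpace X] [MetricSpace Y] (f : X → Y) : Prop where
  uniformlyBornologous : ∀ r, ∃ s, ∀ x x', dist x x' ≤ r → dist (f x) (f x') ≤ s
  effectivelyProper : ∀ s, ∃ r, ∀ x x', dist (f x) (f x') ≤ s → dist x x' ≤ r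

section

variable {X Y : Type*} [MetricSpace X] [MetricSpace Y] {f : X → Y}

theorem RDisjoint.image_preimage_s17 {r s : ℝ} {𝒱 : Set (Set Y)} (h𝒱 : RDisjoint s 𝒱)
    (hf : ∀ x x', dist x x' ≤ r → dist (f x) (f x') ≤ s) :
    RDisjoint r ((f ⁻¹' ·) '' 𝒱) := by
  rintro _ ⟨V, hV, rfl⟩ _ ⟨V', hV', rfl⟩ hne x hx x' hx'
  have hVV' : V ≠ V' := by rintro rfl; exact hne rfl
  by_contra! hle
  exact (h𝒱 V hV V' hV' hVV' _ hx _ hx').not_ge (hf x x' hle)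

theorem APC.of_isCoarseEmbedding (hY : APC Y) (hf : IsCoarseEmbedding f) : APC X := by
  intro R hR
  choose S hS using fun i => hf.uniformlyBornologous (R i)
  obtain ⟨n, 𝒱, D, hdisj, hcov, hbdd⟩ :=
    hY (fun i => max (S i) 1) fun i => one_pos.trans_le (le_max_right _ _)
  obtain ⟨D', hD'⟩ := hf.effectivelyProper D
  refine ⟨n, fun i => (f ⁻¹' ·) '' 𝒱 i, D', fun i => (hdisj i).image_preimage_s17 ?_, ?_, ?_⟩
  · exact fun x x' hxx' => (hS i x x' hxx').trans (le_max_left _ _)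
  · intro x
    obtain ⟨i, V, hV, hx⟩ := hcov (f x)
    exact ⟨i, f ⁻¹' V, ⟨V, hV, rfl⟩, hx⟩
  · rintro i _ ⟨V, hV, rfl⟩ x hx x' hx'
    exact hD' x x' (hbdd i V hV _ hx _ hx')

theorem isCoarseEmbedding_of_control {ρ₁ ρ₂ : ℝ → ℝ} (hρ₂ : Monotone ρ₂)
    (hρ₁ : Tendsto ρ₁ atTop atTop) (hlower : ∀ x x', ρ₁ (dist x x') ≤ dist (f x) (f x'))
    (hupper : ∀ x x', dist (f x) (f x') ≤ ρ₂ (dist x x')) : IsCoarseEmbedding f where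
  uniformlyBornologous r := ⟨ρ₂ r, fun x x' h => (hupper x x').trans (hρ₂ h)⟩
  effectivelyProper s := by
    obtain ⟨r, hr⟩ := eventually_atTop.mp (tendsto_atTop.mp hρ₁ (s + 1))
    refine ⟨r, fun x x' h => ?_⟩
    by_contra! hlt
    linarith [hr _ hlt.le, hlower x x']

theorem IsCoarseEmbedding.coarseRightInverse (hf : IsCoarseEmbedding f) {g : Y → X} {C : ℝ}
    (hg : ∀ y, dist (f (g y)) y ≤ C) : IsCoarseEmbedding g := by
  have hfg (y y') : dist (f (g y)) (f (g y')) ≤ dist y y' + 2 * C := by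
    linarith [dist_triangle4 (f (g y)) y y' (f (g y')), hg y, dist_comm y' (f (g y')), hg y']
  have hyy' (y y') : dist y y' ≤ dist (f (g y)) (f (g y')) + 2 * C := by
    linarith [dist_triangle4 y (f (g y)) (f (g y')) y', hg y, dist_comm y (f (g y)), hg y']
  constructor
  · intro r
    obtain ⟨s, hs⟩ := hf.effectivelyProper (r + 2 * C)
    exact ⟨s, fun y y' h => hs _ _ ((hfg y y').trans (by linarith))⟩
  · intro s
    obtain ⟨r, hr⟩ := hf.uniformlyBornologous s
    exact ⟨r + 2 * C, fun y y' h => (hyy' y y').trans (by linarith [hr _ _ h])⟩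

end

/-- Asymptotic property C is a coarse invariant. -/
theorem apc_coarse_invariant {X Y : Type*} [MetricSpace X] [MetricSpace Y]
    (h : CoarselyEquivalent X Y) : APC X ↔ APC Y := by
  obtain ⟨f, ρ₁, ρ₂, C, -, hρ₂, hρ₁, hlower, hupper, -, hdense⟩ := h
  have hf : IsCoarseEmbedding f := isCoarseEmbedding_of_control hρ₂ hρ₁ hlower hupper
  choose g hg using hdense
  exact ⟨fun hX => hX.of_isCoarseEmbedding (hf.coarseRightInverse fun y => (hg y).le),
    fun hY => hY.of_isCoarseEmbedding hf⟩
end
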